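/- If G is a subcubic simple graph without isolated vertices satisfying ν_ac(G) < (n(G) − κ_G(K_{2,3}) − κ_G(K_4^+) − 2·κ_G(K_{3,3}))/4 and G has minimum order among all such graphs, then no subgraph of G is isomorphic to K_4^+. -/

import Mathlib

open SimpleGraph

/-- `K4plus` is the graph obtained from `K_4` (on vertices 0,1,2,3) by subdividing
the edge between 0 and 1 once, using 4 as the subdivision vertex. -/
def K4plus : SimpleGraph (Fin 5) :=
  SimpleGraph.fromRel (fun a b =>
    (a, b) ∈ ([(0,2),(0,3),(1,2),(1,3),(2,3),(0,4),(1,4)] : List (Fin 5 × Fin 5)))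

/-- The complete bipartite graph `K_{2,3}`. -/
def K23 : SimpleGraph (Fin 2 ⊕ Fin 3) := completeBipartiteGraph (Fin 2) (Fin 3)

/-- The complete bipartite graph `K_{3,3}`. -/
def K33 : SimpleGraph (Fin 3 ⊕ Fin 3) := completeBipartiteGraph (Fin 3) (Fin 3)

/-- A matching `M` in `G` is acyclic if the subgraph of `G` induced by the set of
vertices incident to an edge of `M` is a forest. -/
def IsAcyclicMatching {V : Type*} (G : SimpleGraph V) (M : G.Subgraph) : Prop :=
  M.IsMatching ∧ (G.induce M.support).IsAcyclic

/-- The acyclic matching number of `G`: the maximum number of edges of an acyclic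
matching in `G`. -/
noncomputable def acyclicMatchingNumber {V : Type*} (G : SimpleGraph V) : ℕ :=
  sSup {k | ∃ M : G.Subgraph, IsAcyclicMatching G M ∧ M.edgeSet.ncard = k}

/-- `kappa G H` is the number of connected components of `G` whose induced subgraph
is isomorphic to `H`. -/
noncomputable def kappa {V W : Type*} (G : SimpleGraph V) (H : SimpleGraph W) : ℕ :=
  Nat.card {c : G.ConnectedComponent // Nonempty ((G.induce c.supp) ≃g H)}

/-- A graph is subcubic if every vertex has degree at most 3. -/
def Subcubic {V : Type*} (G : SimpleGraph V) : Prop :=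
  ∀ v, (G.neighborSet v).ncard ≤ 3

/-- A graph has no isolated vertices if every vertex has a neighbor. -/
def NoIsolatedVerts {V : Type*} (G : SimpleGraph V) : Prop :=
  ∀ v, ∃ w, G.Adj v w

/-- The lower bound `(n(G) - κ_G(K_{2,3}) - κ_G(K_4^+) - 2 κ_G(K_{3,3}))/4`. -/
noncomputable def acmBound {V : Type*} [Fintype V] (G : SimpleGraph V) : ℚ :=
  ((Fintype.card V : ℚ) - kappa G K23 - kappa G K4plus - 2 * kappa G K33) / 4

/-- `G` is a counterexample of minimum order to the bound
`ν_ac(G) ≥ (n(G) - κ_G(K_{2,3}) - κ_G(K_4^+) - 2 κ_G(K_{3,3}))/4`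
among subcubic graphs without isolated vertices. -/
def IsMinCounterexample {V : Type} [Fintype V] (G : SimpleGraph V) : Prop :=
  Subcubic G ∧ NoIsolatedVerts G ∧ (acyclicMatchingNumber G : ℚ) < acmBound G ∧
  ∀ (W : Type) [Fintype W] (H : SimpleGraph W),
    Subcubic H → NoIsolatedVerts H → (acyclicMatchingNumber H : ℚ) < acmBound H →
    Fintype.card V ≤ Fintype.card W

/-!
Let `f` embed `K_4^+` into a minimal counterexample `G`, with `f 4` the subdivision vertex.
As `G` is subcubic, `f 0, …, f 3` have no neighbours outside the copy. If `f 4` has none either,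
the copy is a `K_4^+` component, and deleting it removes five vertices and one `K_4^+` component.
Otherwise deleting `f 0, …, f 3` removes four vertices and creates no component isomorphic to
`K_{2,3}`, `K_4^+` or `K_{3,3}`: these have minimum degree two, while `f 4` keeps one neighbour.
In both cases the edge `f 2 f 3` extends every acyclic matching of the remaining graph, since its
ends have no neighbours there, so the remaining graph is a smaller counterexample.
-/

open Function

namespace SimpleGraph

variable {V W : Type*} {G : SimpleGraph V} {X : SimpleGraph W} {s : Set V}

theorem Reachable.mem_of_forall_adj_mem {S : Set V} (hS : ∀ x ∈ S, ∀ y, G.Adj x y → y ∈ S)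
    {u v : V} (h : G.Reachable u v) (hu : u ∈ S) : v ∈ S := by
  rw [reachable_iff_reflTransGen] at h
  induction h with
  | refl => exact hu
  | tail _ hadj ih => exact hS _ ih _ hadj

noncomputable def induceInduceIso (G : SimpleGraph V) (s : Set V) (t : Set s) :
    (G.induce s).induce t ≃g G.induce (Subtype.val '' t) where
  toEquiv := Equiv.Set.image Subtype.val t Subtype.val_injective
  map_rel_iff' := by simp [Equiv.Set.image, Equiv.Set.imageOfInjOn]

theorem IsAcyclic.map (f : V ↪ W) (h : G.IsAcyclic) : (G.map f).IsAcyclic := by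
  intro w c hc
  have hrange : ∀ x ∈ c.support, x ∈ Set.range (Embedding.map f G) := by
    intro x hx
    obtain ⟨y, -, hxy⟩ := adj_of_mem_walk_support c hc.not_nil hx
    obtain ⟨x', -, -, rfl, -⟩ := (map_adj f G x y).mp hxy
    exact ⟨x', rfl⟩
  have hcyc : ((c.induce _ hrange).map (Embedding.induce _).toHom).IsCycle := by
    rwa [Walk.map_induce]
  exact h.embedding (Embedding.map f G).isoInduceRange.symm.toEmbedding _ hcyc.of_map

theorem isAcyclic_induce_union_pair {S : Set V} {a b : V} (hS : (G.induce S).IsAcyclic)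
    (hab : G.Adj a b) (ha : ∀ y, G.Adj a y → y ∉ S) (hb : ∀ y, G.Adj b y → y ∉ S) :
    (G.induce (S ∪ {a, b})).IsAcyclic := by
  -- `a` is isolated in the copy of `G[S]` on `V`, so adding the edge `ab` creates no cycle.
  have haS : a ∉ S := hb a hab.symm
  have hnreach : ¬ ((G.induce S).map (Function.Embedding.subtype S)).Reachable a b := by
    rintro ⟨p⟩
    cases p with
    | nil => exact hab.ne rfl
    | cons h _ =>
      obtain ⟨x, -, -, hx, -⟩ := (map_adj _ _ _ _).mp h
      exact haS (hx ▸ x.2)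
  refine ((hS.map _).sup_edge_of_not_reachable hnreach).comap
    ⟨Subtype.val, ?_⟩ Subtype.val_injective
  rintro ⟨x, hx⟩ ⟨y, hy⟩ hxy
  simp only [comap_adj, Function.Embedding.coe_subtype] at hxy
  simp only [sup_adj, edge_adj, map_adj]
  have hyx := hxy.symm
  rcases hx with hx | rfl | rfl <;> rcases hy with hy | rfl | rfl
  · exact Or.inl ⟨⟨x, hx⟩, ⟨y, hy⟩, hxy, rfl, rfl⟩
  all_goals grind [Adj.ne]

theorem ConnectedComponent.supp_map_induce {c : (G.induce s).ConnectedComponent}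
    (hc : ∀ x ∈ c.supp, ∀ y, G.Adj x y → y ∈ s) :
    (c.map (Embedding.induce s).toHom).supp = Subtype.val '' c.supp := by
  obtain ⟨x, rfl⟩ := c.exists_rep
  ext y
  refine ⟨fun hy => ?_, ?_⟩
  · refine (ConnectedComponent.exact hy).symm.mem_of_forall_adj_mem ?_ ⟨x, rfl, rfl⟩
    rintro _ ⟨z, hz, rfl⟩ w hzw
    exact ⟨⟨w, hc z hz w hzw⟩, mem_supp_of_adj_mem_supp _ hz hzw, rfl⟩
  · rintro ⟨z, hz, rfl⟩
    exact congrArg (ConnectedComponent.map (Embedding.induce s).toHom) hz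

theorem ConnectedComponent.exists_ne_adj_of_iso {c : G.ConnectedComponent}
    (e : G.induce c.supp ≃g X) (hX : ∀ w, ∃ y z, y ≠ z ∧ X.Adj w y ∧ X.Adj w z) {x : V}
    (hx : x ∈ c.supp) : ∃ y z, y ≠ z ∧ G.Adj x y ∧ G.Adj x z := by
  obtain ⟨y, z, hyz, hy, hz⟩ := hX (e ⟨x, hx⟩)
  refine ⟨e.symm y, e.symm z, fun h => hyz (e.symm.injective (Subtype.ext h)), ?_, ?_⟩
  · simpa using e.symm.map_adj_iff.mpr hy
  · simpa using e.symm.map_adj_iff.mpr hz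

theorem Hom.exists_adj_apply_eq [Finite V] (f : X →g G) (hf : Injective f)
    {w : W} (hdeg : (G.neighborSet (f w)).ncard ≤ (X.neighborSet w).ncard) {y : V}
    (hy : G.Adj (f w) y) : ∃ z, X.Adj w z ∧ f z = y := by
  have hsub : f '' X.neighborSet w ⊆ G.neighborSet (f w) := by
    rintro _ ⟨z, hz, rfl⟩
    exact f.map_adj hz
  have heq := Set.eq_of_subset_of_ncard_le hsub (by rwa [Set.ncard_image_of_injective _ hf])
  obtain ⟨z, hz, rfl⟩ : y ∈ f '' X.neighborSet w := heq ▸ hy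
  exact ⟨z, hz, rfl⟩

end SimpleGraph

section AcyclicMatching

variable {V : Type*} {G : SimpleGraph V}

theorem isAcyclicMatching_bot (G : SimpleGraph V) : IsAcyclicMatching G ⊥ := by
  refine ⟨fun v hv => hv.elim, fun v _ _ => ?_⟩
  obtain ⟨_, hw⟩ := v.2
  exact hw.elim

variable [Finite V]

theorem bddAbove_acyclicMatching_ncard (G : SimpleGraph V) :
    BddAbove {k | ∃ M : G.Subgraph, IsAcyclicMatching G M ∧ M.edgeSet.ncard = k} :=
  ⟨Nat.card (Sym2 V), by rintro _ ⟨M, -, rfl⟩; exact Set.ncard_le_card _⟩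

theorem IsAcyclicMatching.ncard_le {M : G.Subgraph} (hM : IsAcyclicMatching G M) :
    M.edgeSet.ncard ≤ acyclicMatchingNumber G :=
  le_csSup (bddAbove_acyclicMatching_ncard G) ⟨M, hM, rfl⟩

theorem exists_isAcyclicMatching_ncard_eq (G : SimpleGraph V) :
    ∃ M : G.Subgraph, IsAcyclicMatching G M ∧ M.edgeSet.ncard = acyclicMatchingNumber G :=
  Nat.sSup_mem ⟨0, by exact ⟨⊥, isAcyclicMatching_bot G, by simp⟩⟩
    (bddAbove_acyclicMatching_ncard G)

theorem acyclicMatchingNumber_induce_compl_add_one_le {D : Set V} {a b : V} (hab : G.Adj a b)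
    (ha : ∀ y, G.Adj a y → y ∈ D) (hb : ∀ y, G.Adj b y → y ∈ D) :
    acyclicMatchingNumber (G.induce Dᶜ) + 1 ≤ acyclicMatchingNumber G := by
  obtain ⟨M', ⟨hM', hM'acyc⟩, hcard⟩ := exists_isAcyclicMatching_ncard_eq (G.induce Dᶜ)
  set ι := (Embedding.induce Dᶜ : G.induce Dᶜ ↪g G).toHom
  have hι : Injective ι := (Embedding.induce (G := G) Dᶜ).injective
  set M := M'.map ι ⊔ G.subgraphOfAdj hab
  have hD : ({a, b} : Set V) ⊆ D := by
    rintro _ (rfl | rfl)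
    exacts [hb _ hab.symm, ha _ hab]
  have hmatch : M.IsMatching := by
    refine (hM'.map ι hι).sup (.subgraphOfAdj hab) ?_
    rw [(hM'.map ι hι).support_eq_verts, support_subgraphOfAdj]
    exact Set.disjoint_left.mpr fun _ ⟨x, _, hx⟩ hab' => x.2 (by subst hx; exact hD hab')
  have hsupp : M.support = Subtype.val '' M'.support ∪ {a, b} := by
    rw [hmatch.support_eq_verts, hM'.support_eq_verts]
    rfl
  have hacyc : (G.induce M.support).IsAcyclic := by
    rw [hsupp]
    refine isAcyclic_induce_union_pair
      ((induceInduceIso G Dᶜ M'.support).isAcyclic_iff.mp hM'acyc) hab ?_ ?_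
    · rintro y hy ⟨x, -, rfl⟩; exact x.2 (ha _ hy)
    · rintro y hy ⟨x, -, rfl⟩; exact x.2 (hb _ hy)
  have hdisj : Disjoint (Sym2.map ι '' M'.edgeSet) {s(a, b)} := by
    rw [Set.disjoint_singleton_right]
    rintro ⟨e, -, he⟩
    obtain ⟨x, -, hx⟩ := Sym2.mem_map.mp (he ▸ Sym2.mem_mk_left a b)
    exact x.2 (hD (Or.inl hx))
  have hedges : M.edgeSet.ncard = M'.edgeSet.ncard + 1 := by
    rw [Subgraph.edgeSet_sup, Subgraph.edgeSet_map, edgeSet_subgraphOfAdj,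
      Set.ncard_union_eq hdisj, Set.ncard_image_of_injective _ (Sym2.map.injective hι),
      Set.ncard_singleton]
  calc acyclicMatchingNumber (G.induce Dᶜ) + 1 = M.edgeSet.ncard := by rw [hedges, hcard]
    _ ≤ acyclicMatchingNumber G := IsAcyclicMatching.ncard_le ⟨hmatch, hacyc⟩

end AcyclicMatching

section Kappa

variable {V W : Type*} {G : SimpleGraph V} {X : SimpleGraph W} {s : Set V}

theorem kappa_eq_ncard (G : SimpleGraph V) (X : SimpleGraph W) :
    kappa G X = {c : G.ConnectedComponent | Nonempty (G.induce c.supp ≃g X)}.ncard :=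
  Nat.card_coe_set_eq _

theorem kappa_induce_add_ncard_le [Finite V]
    (hcl : ∀ c : (G.induce s).ConnectedComponent, Nonempty ((G.induce s).induce c.supp ≃g X) →
      ∀ x ∈ c.supp, ∀ y, G.Adj x y → y ∈ s) :
    kappa (G.induce s) X +
        {c : G.ConnectedComponent | Nonempty (G.induce c.supp ≃g X) ∧ Disjoint c.supp s}.ncard ≤
      kappa G X := by
  set φ := ConnectedComponent.map (Embedding.induce (G := G) s).toHom
  have hle : kappa (G.induce s) X ≤
      ({c : G.ConnectedComponent | Nonempty (G.induce c.supp ≃g X)} \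
        {c | Disjoint c.supp s}).ncard := by
    rw [kappa_eq_ncard]
    refine Set.ncard_le_ncard_of_injOn φ (fun c hc => ⟨?_, ?_⟩) (fun c₁ hc₁ c₂ hc₂ h => ?_)
    · obtain ⟨e⟩ := hc
      show Nonempty (G.induce (φ c).supp ≃g X)
      rw [ConnectedComponent.supp_map_induce (hcl c ⟨e⟩)]
      exact ⟨(induceInduceIso G s c.supp).symm.trans e⟩
    · obtain ⟨x, rfl⟩ := c.exists_rep
      exact Set.not_disjoint_iff.mpr ⟨x, rfl, x.2⟩
    · obtain ⟨x, rfl⟩ := c₁.exists_rep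
      have hx : (x : V) ∈ (φ c₂).supp := h ▸ rfl
      rw [ConnectedComponent.supp_map_induce (hcl c₂ hc₂)] at hx
      obtain ⟨z, hz, hzx⟩ := hx
      rwa [← Subtype.ext hzx]
  have := Set.ncard_inter_add_ncard_sdiff_eq_ncard
    {c : G.ConnectedComponent | Nonempty (G.induce c.supp ≃g X)} {c | Disjoint c.supp s}
  rw [kappa_eq_ncard G X, ← this, add_comm]
  exact Nat.add_le_add_left hle _

theorem kappa_induce_le [Finite V]
    (hcl : ∀ c : (G.induce s).ConnectedComponent, Nonempty ((G.induce s).induce c.supp ≃g X) →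
      ∀ x ∈ c.supp, ∀ y, G.Adj x y → y ∈ s) :
    kappa (G.induce s) X ≤ kappa G X :=
  (Nat.le_add_right _ _).trans (kappa_induce_add_ncard_le hcl)

theorem kappa_induce_lt [Finite V]
    (hcl : ∀ c : (G.induce s).ConnectedComponent, Nonempty ((G.induce s).induce c.supp ≃g X) →
      ∀ x ∈ c.supp, ∀ y, G.Adj x y → y ∈ s)
    {c₀ : G.ConnectedComponent} (hc₀ : Nonempty (G.induce c₀.supp ≃g X))
    (hdisj : Disjoint c₀.supp s) :
    kappa (G.induce s) X < kappa G X :=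
  Nat.lt_of_lt_of_le
    (Nat.lt_add_of_pos_right ((Set.ncard_pos (Set.toFinite _)).mpr ⟨c₀, by exact ⟨hc₀, hdisj⟩⟩))
    (kappa_induce_add_ncard_le hcl)

end Kappa

section Subcubic

variable {V : Type*} [Finite V] {G : SimpleGraph V}

theorem Subcubic.induce (h : Subcubic G) (s : Set V) : Subcubic (G.induce s) := fun x =>
  calc ((G.induce s).neighborSet x).ncard
      = (Subtype.val '' (G.induce s).neighborSet x).ncard :=
        (Set.ncard_image_of_injective _ Subtype.val_injective).symm
    _ ≤ (G.neighborSet x).ncard :=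
        Set.ncard_le_ncard (by rintro _ ⟨y, hy, rfl⟩; exact hy)
    _ ≤ 3 := h x

theorem Subcubic.eq_or_eq_or_eq_of_adj (h : Subcubic G) {x a b c y : V} (ha : G.Adj x a)
    (hb : G.Adj x b) (hc : G.Adj x c) (hab : a ≠ b) (hac : a ≠ c) (hbc : b ≠ c)
    (hy : G.Adj x y) : y = a ∨ y = b ∨ y = c := by
  by_contra! hne
  have hsub : ({y, a, b, c} : Set V) ⊆ G.neighborSet x := by
    rintro z (rfl | rfl | rfl | rfl) <;> assumption
  have := (Set.ncard_le_ncard hsub).trans (h x)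
  rw [Set.ncard_insert_of_notMem (by simp [hne.1, hne.2.1, hne.2.2]),
    Set.ncard_insert_of_notMem (by simp [hab, hac]), Set.ncard_pair hbc] at this
  omega

end Subcubic

theorem NoIsolatedVerts.induce {V : Type*} {G : SimpleGraph V} (h : NoIsolatedVerts G)
    {s : Set V} (hs : ∀ x ∈ s, ∀ y ∉ s, G.Adj x y → ∃ z ∈ s, G.Adj x z) :
    NoIsolatedVerts (G.induce s) := by
  rintro ⟨x, hx⟩
  obtain ⟨y, hxy⟩ := h x
  by_cases hy : y ∈ s
  · exact ⟨⟨y, hy⟩, hxy⟩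
  · obtain ⟨z, hz, hxz⟩ := hs x hx y hy hxy
    exact ⟨⟨z, hz⟩, hxz⟩

noncomputable def kappaWeight {V : Type*} (G : SimpleGraph V) : ℕ :=
  kappa G K23 + kappa G K4plus + 2 * kappa G K33

theorem acmBound_eq {V : Type*} [Fintype V] (G : SimpleGraph V) :
    acmBound G = ((Nat.card V : ℚ) - kappaWeight G) / 4 := by
  simp only [acmBound, kappaWeight, Nat.card_eq_fintype_card]
  push_cast
  ring

theorem IsMinCounterexample.nat_card_le_of_induce {V : Type} [Fintype V] {G : SimpleGraph V}
    (hG : IsMinCounterexample G) (s : Set V) (hs : NoIsolatedVerts (G.induce s))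
    (hν : acyclicMatchingNumber (G.induce s) + 1 ≤ acyclicMatchingNumber G)
    (hw : Nat.card V + kappaWeight (G.induce s) ≤ s.ncard + kappaWeight G + 4) :
    Nat.card V ≤ s.ncard := by
  classical
  obtain ⟨hsub, -, hlt, hmin⟩ := hG
  have hlt' : (acyclicMatchingNumber (G.induce s) : ℚ) < acmBound (G.induce s) := by
    rw [acmBound_eq] at hlt ⊢
    rw [Nat.card_coe_set_eq]
    have hν' : (acyclicMatchingNumber (G.induce s) : ℚ) + 1 ≤ acyclicMatchingNumber G := by
      exact_mod_cast hν
    have hw' : (Nat.card V : ℚ) + kappaWeight (G.induce s) ≤ s.ncard + kappaWeight G + 4 := by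
      exact_mod_cast hw
    linarith
  simpa [← Nat.card_eq_fintype_card] using hmin s (G.induce s) (hsub.induce s) hs hlt'

instance : DecidableRel K4plus.Adj := fun a b =>
  decidable_of_iff _ (SimpleGraph.fromRel_adj _ a b).symm

instance : DecidableRel K23.Adj := fun a b => by
  cases a <;> cases b <;> simp only [K23, completeBipartiteGraph] <;> infer_instance

instance : DecidableRel K33.Adj := fun a b => by
  cases a <;> cases b <;> simp only [K33, completeBipartiteGraph] <;> infer_instance

theorem K23.exists_ne_adj : ∀ w, ∃ y z, y ≠ z ∧ K23.Adj w y ∧ K23.Adj w z := by decide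

theorem K33.exists_ne_adj : ∀ w, ∃ y z, y ≠ z ∧ K33.Adj w y ∧ K33.Adj w z := by decide

theorem K4plus.exists_ne_adj : ∀ w, ∃ y z, y ≠ z ∧ K4plus.Adj w y ∧ K4plus.Adj w z := by decide

theorem K4plus.ncard_neighborSet {i : Fin 5} (hi : i ≠ 4) : (K4plus.neighborSet i).ncard = 3 := by
  rw [Set.ncard_eq_toFinset_card']
  revert i
  decide

theorem K4plus.preconnected : K4plus.Preconnected := by
  have h2 : ∀ i, K4plus.Reachable i 2 := by
    intro i
    fin_cases i
    exacts [Adj.reachable (by decide), Adj.reachable (by decide), Reachable.rfl,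
      Adj.reachable (by decide),
      (Adj.reachable (by decide : K4plus.Adj 4 0)).trans (Adj.reachable (by decide))]
  exact fun i j => (h2 i).trans (h2 j).symm

section K4plusCopy

variable {V : Type*} [Finite V] {G : SimpleGraph V} {f : K4plus →g G}

theorem K4plus.exists_adj_apply_eq (hG : Subcubic G) (hf : Injective f) {i : Fin 5} (hi : i ≠ 4)
    {y : V} (hy : G.Adj (f i) y) : ∃ j, K4plus.Adj i j ∧ f j = y :=
  f.exists_adj_apply_eq hf ((hG _).trans (K4plus.ncard_neighborSet hi).ge) hy

theorem K4plus.adj_apply_iff (hG : Subcubic G) (hf : Injective f) {i j : Fin 5} :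
    G.Adj (f i) (f j) ↔ K4plus.Adj i j := by
  refine ⟨fun h => ?_, f.map_adj⟩
  by_cases hi : i = 4
  · by_cases hj : j = 4
    · subst hi hj
      exact absurd h (G.irrefl)
    · obtain ⟨k, hk, hkj⟩ := K4plus.exists_adj_apply_eq hG hf hj h.symm
      rw [hf hkj] at hk
      exact hk.symm
  · obtain ⟨k, hk, hkj⟩ := K4plus.exists_adj_apply_eq hG hf hi h
    rwa [← hf hkj]

theorem K4plus.mem_range_of_adj (hG : Subcubic G) (hf : Injective f)
    (h4 : ∀ y, G.Adj (f 4) y → y ∈ Set.range f) {x y : V} (hx : x ∈ Set.range f)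
    (hxy : G.Adj x y) : y ∈ Set.range f := by
  obtain ⟨i, rfl⟩ := hx
  by_cases hi : i = 4
  · subst hi
    exact h4 y hxy
  · obtain ⟨j, -, rfl⟩ := K4plus.exists_adj_apply_eq hG hf hi hxy
    exact ⟨j, rfl⟩

theorem K4plus.supp_connectedComponentMk_eq_range (hG : Subcubic G) (hf : Injective f)
    (h4 : ∀ y, G.Adj (f 4) y → y ∈ Set.range f) :
    (G.connectedComponentMk (f 0)).supp = Set.range f := by
  ext y
  refine ⟨fun hy => (ConnectedComponent.exact hy).symm.mem_of_forall_adj_mem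
    (fun _ hx _ => K4plus.mem_range_of_adj hG hf h4 hx) ⟨0, rfl⟩, ?_⟩
  rintro ⟨i, rfl⟩
  exact ConnectedComponent.sound ((K4plus.preconnected i 0).map f)

theorem K4plus.mem_range_sdiff_of_adj (hG : Subcubic G) (hf : Injective f) {i : Fin 5}
    (hi : i ≠ 4) (hi4 : ¬ K4plus.Adj i 4) {y : V} (hy : G.Adj (f i) y) :
    y ∈ Set.range f \ {f 4} := by
  obtain ⟨j, hij, rfl⟩ := K4plus.exists_adj_apply_eq hG hf hi hy
  exact ⟨⟨j, rfl⟩, hf.ne (by rintro rfl; exact hi4 hij)⟩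

theorem K4plus.eq_apply_four_of_adj (hG : Subcubic G) (hf : Injective f) {x y : V}
    (hx : x ∉ Set.range f \ {f 4}) (hy : y ∈ Set.range f \ {f 4}) (hxy : G.Adj x y) :
    x = f 4 := by
  obtain ⟨⟨i, rfl⟩, hi⟩ := hy
  obtain ⟨j, -, rfl⟩ :=
    K4plus.exists_adj_apply_eq hG hf (by rintro rfl; exact hi rfl) hxy.symm
  by_contra hj
  exact hx ⟨⟨j, rfl⟩, hj⟩

/-- `f 4` has two neighbours in the copy and so at most one outside it, whereas every vertex of a
graph of minimum degree two has two neighbours. -/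
theorem K4plus.mem_compl_of_adj_of_mem_supp (hG : Subcubic G) (hf : Injective f)
    {W : Type*} {X : SimpleGraph W} (hX : ∀ w, ∃ y z, y ≠ z ∧ X.Adj w y ∧ X.Adj w z)
    {c : (G.induce (Set.range f \ {f 4})ᶜ).ConnectedComponent}
    (e : (G.induce (Set.range f \ {f 4})ᶜ).induce c.supp ≃g X) {x : ↥(Set.range f \ {f 4})ᶜ}
    (hx : x ∈ c.supp) {y : V} (hxy : G.Adj x y) : y ∈ (Set.range f \ {f 4})ᶜ := by
  intro hy
  obtain ⟨p, q, hpq, hp, hq⟩ := c.exists_ne_adj_of_iso e hX hx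
  have hx4 : (x : V) = f 4 := K4plus.eq_apply_four_of_adj hG hf x.2 hy hxy
  have hmem : ∀ i, i ≠ 4 → f i ∈ Set.range f \ {f 4} := fun i hi => ⟨⟨i, rfl⟩, hf.ne hi⟩
  replace hp : G.Adj (x : V) p := hp
  replace hq : G.Adj (x : V) q := hq
  rw [hx4] at hp hq
  rcases hG.eq_or_eq_or_eq_of_adj (f.map_adj (by decide : K4plus.Adj 4 0))
    (f.map_adj (by decide : K4plus.Adj 4 1)) hp (hf.ne (by decide))
    (fun h => p.2 (h ▸ hmem 0 (by decide))) (fun h => p.2 (h ▸ hmem 1 (by decide))) hq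
    with h | h | h
  · exact q.2 (h ▸ hmem 0 (by decide))
  · exact q.2 (h ▸ hmem 1 (by decide))
  · exact hpq (Subtype.ext h).symm

end K4plusCopy

section MinimalCounterexample

variable {V : Type} [Fintype V] {G : SimpleGraph V} {f : K4plus →g G}

theorem IsMinCounterexample.exists_adj_notMem_range (hG : IsMinCounterexample G)
    (hf : Injective f) : ∃ y, G.Adj (f 4) y ∧ y ∉ Set.range f := by
  by_contra! h4
  set D := Set.range f
  have hout : ∀ x ∈ Dᶜ, ∀ y, G.Adj x y → y ∈ Dᶜ :=
    fun x hx y hxy hy => hx (K4plus.mem_range_of_adj hG.1 hf h4 hy hxy.symm)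
  have hc₀ := K4plus.supp_connectedComponentMk_eq_range hG.1 hf h4
  have hc₀iso : Nonempty (G.induce (G.connectedComponentMk (f 0)).supp ≃g K4plus) := by
    rw [hc₀]
    exact ⟨(Embedding.isoInduceRange ⟨⟨f, hf⟩, K4plus.adj_apply_iff hG.1 hf⟩).symm⟩
  have hcl : ∀ {W : Type} (X : SimpleGraph W) (c : (G.induce Dᶜ).ConnectedComponent),
      Nonempty ((G.induce Dᶜ).induce c.supp ≃g X) → ∀ x ∈ c.supp, ∀ y, G.Adj x y → y ∈ Dᶜ :=
    fun _ _ _ x _ => hout x x.2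
  have hw : kappaWeight (G.induce Dᶜ) + 1 ≤ kappaWeight G := by
    have h23 := kappa_induce_le (hcl K23)
    have h33 := kappa_induce_le (hcl K33)
    have h4p := kappa_induce_lt (hcl K4plus) hc₀iso (hc₀ ▸ disjoint_compl_right)
    unfold kappaWeight
    omega
  have hcard : Dᶜ.ncard + 5 = Nat.card V := by
    rw [← Set.ncard_compl_add_ncard D, Set.ncard_range_of_injective hf, Nat.card_fin]
  have hiso : NoIsolatedVerts (G.induce Dᶜ) :=
    hG.2.1.induce fun x hx y hy hxy => absurd (hout x hx y hxy) hy
  have hclosed : ∀ i, ∀ y, G.Adj (f i) y → y ∈ D :=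
    fun i _ => K4plus.mem_range_of_adj hG.1 hf h4 ⟨i, rfl⟩
  have := hG.nat_card_le_of_induce Dᶜ hiso
    (acyclicMatchingNumber_induce_compl_add_one_le (f.map_adj (by decide : K4plus.Adj 2 3))
      (hclosed 2) (hclosed 3)) (by omega)
  omega

theorem IsMinCounterexample.mem_range_of_adj (hG : IsMinCounterexample G) (hf : Injective f)
    {u : V} (hu : G.Adj (f 4) u) : u ∈ Set.range f := by
  by_contra hur
  set D := Set.range f \ {f 4}
  have hw : kappaWeight (G.induce Dᶜ) ≤ kappaWeight G := by
    have h23 : kappa (G.induce Dᶜ) K23 ≤ kappa G K23 := kappa_induce_le fun _ ⟨e⟩ _ hx _ =>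
      K4plus.mem_compl_of_adj_of_mem_supp hG.1 hf K23.exists_ne_adj e hx
    have h33 : kappa (G.induce Dᶜ) K33 ≤ kappa G K33 := kappa_induce_le fun _ ⟨e⟩ _ hx _ =>
      K4plus.mem_compl_of_adj_of_mem_supp hG.1 hf K33.exists_ne_adj e hx
    have h4p : kappa (G.induce Dᶜ) K4plus ≤ kappa G K4plus := kappa_induce_le fun _ ⟨e⟩ _ hx _ =>
      K4plus.mem_compl_of_adj_of_mem_supp hG.1 hf K4plus.exists_ne_adj e hx
    unfold kappaWeight
    omega
  have hcard : Dᶜ.ncard + 4 = Nat.card V := by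
    rw [← Set.ncard_compl_add_ncard D, Set.ncard_sdiff_singleton_of_mem (Set.mem_range_self 4),
      Set.ncard_range_of_injective hf, Nat.card_fin]
  have hiso : NoIsolatedVerts (G.induce Dᶜ) := by
    refine hG.2.1.induce fun x hx y hy hxy => ⟨u, fun hu' => hur hu'.1, ?_⟩
    rwa [K4plus.eq_apply_four_of_adj hG.1 hf hx (not_not.mp hy) hxy]
  have := hG.nat_card_le_of_induce Dᶜ hiso
    (acyclicMatchingNumber_induce_compl_add_one_le (f.map_adj (by decide : K4plus.Adj 2 3))
      (fun _ => K4plus.mem_range_sdiff_of_adj (i := 2) hG.1 hf (by decide) (by decide))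
      (fun _ => K4plus.mem_range_sdiff_of_adj (i := 3) hG.1 hf (by decide) (by decide)))
    (by omega)
  omega

end MinimalCounterexample

/-- A minimum-order counterexample has no subgraph isomorphic to `K_4^+`. -/
theorem stmt_2 {V : Type} [Fintype V] (G : SimpleGraph V)
    (hmin : IsMinCounterexample G) :
    ∀ H : G.Subgraph, ¬ Nonempty (H.coe ≃g K4plus) := by
  rintro H ⟨e⟩
  have hf : Injective (H.hom.comp e.symm.toHom) := H.hom_injective.comp e.symm.injective
  obtain ⟨u, hu, hur⟩ := hmin.exists_adj_notMem_range hf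
  exact hur (hmin.mem_range_of_adj hf hu)
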